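/- arXiv:2408.07141 — 2 statements merged into one kernel-verified Lean document; each statement's English description precedes it below -/
import Mathlib

section
/- Let h > 0 and let S_n ⊆ Ω be a sequence of nonempty sets with dist(S_n, ∂Ω) ≥ h for all n. If the signed distance functions d_{S_n} converge uniformly on Ω to the signed distance function d_S of a nonempty set S, then dist(S, ∂Ω) ≥ h. -/
open Metric Set

/-- Signed distance function of a set `S`. -/
noncomputable def sdist (S : Set (EuclideanSpace ℝ (Fin 3))) (x : EuclideanSpace ℝ (Fin 3)) : ℝ :=
  infDist x (closure Sᶜ) - infDist x (closure S)


lemma le_infDist_of_forall {α : Type*} [MetricSpace α] {s : Set α} (hs : s.Nonempty)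
    {x : α} {b : ℝ} (hb : ∀ y ∈ s, b ≤ dist x y) : b ≤ infDist x s := by
  rw [Metric.infDist_eq_iInf]
  haveI := hs.to_subtype
  exact le_ciInf fun y => hb y y.2

/-- If nonempty sets `S n ⊆ Ω` satisfy `dist(S n, ∂Ω) ≥ h` and their signed distance
functions converge uniformly on `Ω` to the signed distance function of a nonempty set `S`,
then `dist(S, ∂Ω) ≥ h`. -/
theorem dist_limit_body_boundary
    (Ω : Set (EuclideanSpace ℝ (Fin 3))) (h : ℝ) (hh : 0 < h)
    (S : ℕ → Set (EuclideanSpace ℝ (Fin 3))) (Slim : Set (EuclideanSpace ℝ (Fin 3)))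
    (hSn : ∀ n, (S n).Nonempty) (hSsub : ∀ n, S n ⊆ Ω) (hSlim : Slim.Nonempty)
    (hdist : ∀ n, ∀ x ∈ S n, h ≤ infDist x (frontier Ω))
    (hconv : ∀ ε > 0, ∃ N : ℕ, ∀ n ≥ N, ∀ x ∈ Ω, |sdist (S n) x - sdist Slim x| ≤ ε) :
    ∀ x ∈ Slim, h ≤ infDist x (frontier Ω) := by
  intro x hx
  rcases (frontier Ω).eq_empty_or_nonempty with hF | hF
  · exfalso
    obtain ⟨s, hs⟩ := hSn 0
    have := hdist 0 s hs
    rw [hF, Metric.infDist_empty] at this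
    linarith
  refine le_infDist_of_forall hF fun y hy => ?_
  refine le_of_forall_pos_le_add fun ε hε => ?_
  set δ := min (ε / 3) (h / 2) with hδdef
  have hδpos : 0 < δ := lt_min (by linarith) (by linarith)
  have hδε : δ ≤ ε / 3 := min_le_left _ _
  have hδh : δ ≤ h / 2 := min_le_right _ _
  obtain ⟨z, hzΩ, hzy⟩ : ∃ z ∈ Ω, dist y z < δ := by
    have hyc : y ∈ closure Ω := frontier_subset_closure hy
    exact (Metric.mem_closure_iff.1 hyc) δ hδpos
  obtain ⟨N, hN⟩ := hconv δ hδpos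
  -- lower bound on infDist z (closure (S N))
  have hinf : h - δ ≤ infDist z (closure (S N)) := by
    rw [Metric.infDist_closure]
    refine le_infDist_of_forall (hSn N) fun s hs => ?_
    have h1 : h ≤ dist s y := le_trans (hdist N s hs) (Metric.infDist_le_dist_of_mem hy)
    have h2 : dist s y ≤ dist s z + dist z y := dist_triangle s z y
    have h3 : dist z y = dist y z := dist_comm z y
    have h4 : dist z s = dist s z := dist_comm z s
    linarith
  have hzpos : 0 < infDist z (closure (S N)) := lt_of_lt_of_le (by linarith) hinf
  have hznot : z ∉ closure (S N) := by
    intro hzmem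
    rw [Metric.infDist_zero_of_mem hzmem] at hzpos
    exact lt_irrefl _ hzpos
  have hznotS : z ∈ (S N)ᶜ := fun hzS => hznot (subset_closure hzS)
  have hfirst : infDist z (closure (S N)ᶜ) = 0 :=
    Metric.infDist_zero_of_mem (subset_closure hznotS)
  have hsdistN : sdist (S N) z ≤ δ - h := by
    unfold sdist
    rw [hfirst]
    linarith
  have habs : |sdist (S N) z - sdist Slim z| ≤ δ := hN N le_rfl z hzΩ
  have hup : sdist Slim z ≤ sdist (S N) z + δ := by
    have := abs_le.1 habs
    linarith [this.1]
  have hlow : -dist z x ≤ sdist Slim z := by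
    unfold sdist
    have h1 : infDist z (closure Slim) ≤ dist z x :=
      Metric.infDist_le_dist_of_mem (subset_closure hx)
    have h2 : (0:ℝ) ≤ infDist z (closure Slimᶜ) := Metric.infDist_nonneg
    linarith
  have htri : dist z x ≤ dist z y + dist y x := dist_triangle z y x
  have hc1 : dist z y = dist y z := dist_comm z y
  have hc2 : dist y x = dist x y := dist_comm y x
  linarith
end

section
/- Let Ω ⊆ ℝ³ have finite measure and let f_n, f : Ω → [0,∞). If f_n ⇀ f weakly in L¹(Ω), the sequence f_n log f_n is equi-integrable, and ∫_Ω f_n log f_n → ∫_Ω f log f, then f_n → f strongly in L¹(Ω). -/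
open MeasureTheory Filter Real Set
open scoped ENNReal NNReal Topology

noncomputable def phiD (a b : ℝ) : ℝ :=
  a * Real.log a + b * Real.log b - 2 * (((a+b)/2) * Real.log ((a+b)/2))

lemma mul_log_ge_sub_one {z : ℝ} (hz : 0 ≤ z) : z - 1 ≤ z * Real.log z := by
  rcases eq_or_lt_of_le hz with h | h
  · simp [← h]
  · have h1 : Real.log (1/z) ≤ 1/z - 1 := Real.log_le_sub_one_of_pos (by positivity)
    rw [Real.log_div one_ne_zero h.ne', Real.log_one] at h1
    have h2 := mul_le_mul_of_nonneg_left h1 h.le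
    rw [mul_sub, mul_sub, mul_zero, mul_one, mul_one_div, div_self h.ne'] at h2
    linarith

lemma mul_log_tangent {z w : ℝ} (hz : 0 ≤ z) (hw : 0 < w) :
    z * (1 + Real.log w) - w ≤ z * Real.log z := by
  rcases eq_or_lt_of_le hz with h | h
  · simp [← h]; positivity
  · have h1 : Real.log (w/z) ≤ w/z - 1 := Real.log_le_sub_one_of_pos (by positivity)
    rw [Real.log_div hw.ne' h.ne'] at h1
    have h2 := mul_le_mul_of_nonneg_left h1 h.le
    have h3 : z * (w / z) = w := by field_simp
    rw [mul_sub, mul_sub, mul_one, h3] at h2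
    linarith

lemma phiD_nonneg {a b : ℝ} (ha : 0 ≤ a) (hb : 0 ≤ b) : 0 ≤ phiD a b := by
  have := Real.convexOn_mul_log.2 (mem_Ici.2 ha) (mem_Ici.2 hb)
    (by norm_num : (0:ℝ) ≤ 1/2) (by norm_num : (0:ℝ) ≤ 1/2) (by norm_num)
  simp only [smul_eq_mul] at this
  have e : (1:ℝ)/2*a+1/2*b = (a+b)/2 := by ring
  rw [e] at this
  unfold phiD
  linarith

lemma phiD_pos {a b : ℝ} (ha : 0 ≤ a) (hb : 0 ≤ b) (hab : a ≠ b) : 0 < phiD a b := by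
  have := Real.strictConvexOn_mul_log.2 (mem_Ici.2 ha) (mem_Ici.2 hb) hab
    (by norm_num : (0:ℝ) < 1/2) (by norm_num : (0:ℝ) < 1/2) (by norm_num)
  simp only [smul_eq_mul] at this
  have e : (1:ℝ)/2*a+1/2*b = (a+b)/2 := by ring
  rw [e] at this
  unfold phiD
  linarith

lemma phiD_mono {b a₁ a₂ : ℝ} (hb : 0 ≤ b) (h1 : b < a₁) (h12 : a₁ ≤ a₂) :
    phiD a₁ b ≤ phiD a₂ b := by
  have key : MonotoneOn (fun a => phiD a b) (Ici a₁) := by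
    have hcont : ContinuousOn (fun a => phiD a b) (Ici a₁) := by
      apply Continuous.continuousOn
      unfold phiD
      exact (Real.continuous_mul_log.add continuous_const).sub
        (continuous_const.mul (Real.continuous_mul_log.comp
          ((continuous_id.add continuous_const).div_const 2)))
    have hderiv : ∀ x ∈ interior (Ici a₁), HasDerivAt (fun a => phiD a b)
        ((Real.log x + 1) - 2 * ((Real.log ((x+b)/2) + 1) * (2⁻¹))) x := by
      intro x hx
      rw [interior_Ici, mem_Ioi] at hx
      have hx0 : (0:ℝ) < x := lt_of_le_of_lt hb (h1.trans hx)
      have hm0 : ((x+b)/2) ≠ 0 := by positivity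
      have h2 : HasDerivAt (fun a : ℝ => (a+b)/2) 2⁻¹ x := by
        simpa using ((hasDerivAt_id x).add_const b).div_const 2
      have h3 : HasDerivAt (fun a : ℝ => ((a+b)/2) * Real.log ((a+b)/2))
          ((Real.log ((x+b)/2) + 1) * 2⁻¹) x :=
        by have := (Real.hasDerivAt_mul_log hm0 : HasDerivAt (fun y => y * Real.log y) _ _).comp x h2
           exact this
      exact (((Real.hasDerivAt_mul_log hx0.ne').add_const (b * Real.log b)).sub
        (h3.const_mul 2))
    apply monotoneOn_of_deriv_nonneg (convex_Ici a₁) hcont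
    · intro x hx; exact (hderiv x hx).differentiableAt.differentiableWithinAt
    · intro x hx
      rw [(hderiv x hx).deriv]
      rw [interior_Ici, mem_Ioi] at hx
      have hx0 : (0:ℝ) < x := lt_of_le_of_lt hb (h1.trans hx)
      have hbx : b < x := h1.trans hx
      have : Real.log ((x+b)/2) ≤ Real.log x :=
        Real.log_le_log (by positivity) (by linarith)
      linarith
  exact key self_mem_Ici (mem_Ici.2 h12) h12

lemma phiD_lb {M ε : ℝ} (hM : 0 ≤ M) (hε : 0 < ε) :
    ∃ c > 0, ∀ a b, 0 ≤ a → 0 ≤ b → b ≤ M → ε ≤ |a - b| → c ≤ phiD a b := by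
  set K : Set (ℝ × ℝ) := (Icc 0 (M+ε) ×ˢ Icc 0 M) ∩ {p : ℝ × ℝ | ε ≤ |p.1 - p.2|} with hKdef
  have hK : IsCompact K :=
    (isCompact_Icc.prod isCompact_Icc).inter_right
      (isClosed_le continuous_const ((continuous_fst.sub continuous_snd).abs))
  have hne : K.Nonempty := ⟨(ε, 0), by
    constructor
    · exact ⟨⟨le_of_lt hε, by linarith⟩, ⟨le_rfl, hM⟩⟩
    · simp [abs_of_pos hε, le_refl]⟩
  have hcont : ContinuousOn (fun p : ℝ × ℝ => phiD p.1 p.2) K := by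
    apply Continuous.continuousOn
    unfold phiD
    exact ((Real.continuous_mul_log.comp continuous_fst).add
      (Real.continuous_mul_log.comp continuous_snd)).sub
      (continuous_const.mul (Real.continuous_mul_log.comp
        ((continuous_fst.add continuous_snd).div_const 2)))
  obtain ⟨p₀, hp₀K, hmin⟩ := hK.exists_isMinOn hne hcont
  have hc : 0 < phiD p₀.1 p₀.2 := by
    apply phiD_pos hp₀K.1.1.1 hp₀K.1.2.1
    intro h
    have := hp₀K.2
    rw [mem_setOf_eq, h, sub_self, abs_zero] at this
    linarith
  refine ⟨phiD p₀.1 p₀.2, hc, fun a b ha hb hbM hab => ?_⟩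
  by_cases hcase : a ≤ M + ε
  · exact hmin (⟨⟨⟨ha, hcase⟩, ⟨hb, hbM⟩⟩, hab⟩ : (a, b) ∈ K)
  · push_neg at hcase
    have h1 : phiD (b + ε) b ≤ phiD a b :=
      phiD_mono hb (by linarith) (by linarith)
    have h2 : ((b + ε, b) : ℝ × ℝ) ∈ K :=
      ⟨⟨⟨show (0:ℝ) ≤ b + ε by linarith, show b + ε ≤ M + ε by linarith⟩, ⟨hb, hbM⟩⟩,
        show ε ≤ |(b + ε) - b| by simp [abs_of_pos hε]⟩
    exact le_trans (hmin h2) h1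

lemma le_exp_add_abs_mul_log {z : ℝ} (hz : 0 ≤ z) : z ≤ Real.exp 1 + |z * Real.log z| := by
  by_cases hc : z ≤ Real.exp 1
  · have := abs_nonneg (z * Real.log z); linarith
  · push_neg at hc
    have h1 : (1:ℝ) ≤ Real.log z := by
      rw [← Real.log_exp 1]
      exact Real.log_le_log (Real.exp_pos 1) hc.le
    have h2 : z ≤ z * Real.log z := by nlinarith
    have h3 : z * Real.log z ≤ |z * Real.log z| := le_abs_self _
    have := Real.exp_pos 1
    linarith
set_option maxHeartbeats 2000000 in
/-- Strict convexity lemma: if non-negative `f_n ⇀ f` weakly in `L¹(Ω)` (tested against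
bounded measurable functions), `∫ f_n log f_n → ∫ f log f`, and `(f_n log f_n)` is
equi-integrable, then `f_n → f` strongly in `L¹(Ω)`. -/
theorem weak_convergence_strictly_convex_implies_strong
    {α : Type*} [MeasurableSpace α] (μ : Measure α) [IsFiniteMeasure μ]
    (f : ℕ → α → ℝ) (flim : α → ℝ)
    (hnonneg : ∀ n, ∀ x, 0 ≤ f n x) (hlimnonneg : ∀ x, 0 ≤ flim x)
    (hint : ∀ n, Integrable (f n) μ) (hlimint : Integrable flim μ)
    (hintlog : ∀ n, Integrable (fun x => f n x * Real.log (f n x)) μ)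
    (hlimintlog : Integrable (fun x => flim x * Real.log (flim x)) μ)
    (hweak : ∀ g : α → ℝ, Measurable g → (∃ M : ℝ, ∀ x, |g x| ≤ M) →
      Tendsto (fun n => ∫ x, f n x * g x ∂μ) atTop (nhds (∫ x, flim x * g x ∂μ)))
    (hconvex : Tendsto (fun n => ∫ x, f n x * Real.log (f n x) ∂μ) atTop
      (nhds (∫ x, flim x * Real.log (flim x) ∂μ)))
    (hunif : UnifIntegrable (fun n x => f n x * Real.log (f n x)) 1 μ) :
    Tendsto (fun n => ∫ x, |f n x - flim x| ∂μ) atTop (nhds 0) := by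
  classical
  -- measurable representative of flim
  set fm : α → ℝ := hlimint.1.mk flim with hfmdef
  have hmeas : Measurable fm := hlimint.1.stronglyMeasurable_mk.measurable
  have hfme : flim =ᵐ[μ] fm := hlimint.1.ae_eq_mk
  set Ilim : ℝ := ∫ x, flim x * Real.log (flim x) ∂μ with hIlimdef
  set h : ℕ → α → ℝ := fun n x => (f n x + flim x) / 2 with hhdef
  have hh_nonneg : ∀ n x, 0 ≤ h n x := fun n x => by
    have := hnonneg n x; have := hlimnonneg x; simp only [hhdef]; positivity
  have hh_int : ∀ n, Integrable (h n) μ := fun n => ((hint n).add hlimint).div_const 2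
  have hphih_aesm : ∀ n, AEStronglyMeasurable (fun x => h n x * Real.log (h n x)) μ :=
    fun n => Real.continuous_mul_log.comp_aestronglyMeasurable (hh_int n).1
  have hphih_le : ∀ n x, h n x * Real.log (h n x)
      ≤ (f n x * Real.log (f n x) + flim x * Real.log (flim x)) / 2 := by
    intro n x
    have := phiD_nonneg (hnonneg n x) (hlimnonneg x)
    unfold phiD at this
    simp only [hhdef]
    linarith
  have hphih_int : ∀ n, Integrable (fun x => h n x * Real.log (h n x)) μ := by
    intro n
    apply Integrable.mono'
      (((integrable_const (1:ℝ)).add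
        (((hintlog n).abs.add hlimintlog.abs).div_const 2))) (hphih_aesm n)
    apply ae_of_all
    intro x
    rw [Real.norm_eq_abs, abs_le]
    constructor
    · have h1 := mul_log_ge_sub_one (hh_nonneg n x)
      have h2 := hh_nonneg n x
      have := abs_nonneg (f n x * Real.log (f n x))
      have := abs_nonneg (flim x * Real.log (flim x))
      simp only [Pi.add_apply]
      linarith
    · have h1 := hphih_le n x
      have := le_abs_self (f n x * Real.log (f n x))
      have := le_abs_self (flim x * Real.log (flim x))
      simp only [Pi.add_apply]
      linarith
  set I : ℕ → ℝ := fun n => ∫ x, f n x * Real.log (f n x) ∂μ with hIdef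
  set J : ℕ → ℝ := fun n => ∫ x, h n x * Real.log (h n x) ∂μ with hJdef
  have hJ_le : ∀ n, J n ≤ (I n + Ilim) / 2 := by
    intro n
    have hle : J n ≤ ∫ x, (f n x * Real.log (f n x) + flim x * Real.log (flim x))/2 ∂μ :=
      integral_mono (hphih_int n)
        (((hintlog n).add hlimintlog).div_const 2) (fun x => hphih_le n x)
    rwa [integral_div, integral_add (hintlog n) hlimintlog] at hle
  -- truncations
  set w : ℕ → α → ℝ := fun k x => min (max (fm x) (1/((k:ℝ)+1))) ((k:ℝ)+1) with hwdef
  set g : ℕ → α → ℝ := fun k x => 1 + Real.log (w k x) with hgdef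
  have hk1 : ∀ k : ℕ, (0:ℝ) < (k:ℝ) + 1 := fun k => by positivity
  have hw_pos : ∀ (k : ℕ) (x : α), 0 < w k x := fun k x =>
    lt_min (lt_of_lt_of_le (by positivity) (le_max_right _ _)) (hk1 k)
  have hw_le : ∀ (k : ℕ) (x : α), w k x ≤ (k:ℝ)+1 := fun k x => min_le_right _ _
  have hw_ge : ∀ (k : ℕ) (x : α), 1/((k:ℝ)+1) ≤ w k x := fun k x =>
    le_min (le_max_right _ _) (by
      rw [div_le_iff₀ (hk1 k)]; nlinarith [hk1 k])
  have hw_meas : ∀ k : ℕ, Measurable (w k) :=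
    fun k => (hmeas.max measurable_const).min measurable_const
  have hg_meas : ∀ k : ℕ, Measurable (g k) :=
    fun k => measurable_const.add (Real.measurable_log.comp (hw_meas k))
  have hg_bdd : ∀ (k : ℕ) (x : α), |g k x| ≤ 1 + Real.log ((k:ℝ)+1) := by
    intro k x
    have hlw : |Real.log (w k x)| ≤ Real.log ((k:ℝ)+1) := by
      rw [abs_le]
      constructor
      · rw [← Real.log_inv, ← one_div]
        exact Real.log_le_log (by positivity) (hw_ge k x)
      · exact Real.log_le_log (hw_pos k x) (hw_le k x)
    have h0 : |g k x| ≤ |(1:ℝ)| + |Real.log (w k x)| := by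
      simp only [hgdef]; exact abs_add_le _ _
    rw [abs_one] at h0
    linarith
  have hw_int : ∀ k : ℕ, Integrable (w k) μ := fun k =>
    ⟨(hw_meas k).aestronglyMeasurable, HasFiniteIntegral.of_bounded (C := (k:ℝ)+1)
      (ae_of_all _ fun x => by
        rw [Real.norm_eq_abs, abs_of_pos (hw_pos k x)]; exact hw_le k x)⟩
  have hfg_int : ∀ (k n : ℕ), Integrable (fun x => f n x * g k x) μ := fun k n => by
    have := (hint n).bdd_mul ((hg_meas k).aestronglyMeasurable)
      (c := 1 + Real.log ((k:ℝ)+1)) (ae_of_all _ fun x => (Real.norm_eq_abs _) ▸ hg_bdd k x)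
    simpa [mul_comm] using this
  have hflimg_int : ∀ k : ℕ, Integrable (fun x => flim x * g k x) μ := fun k => by
    have := hlimint.bdd_mul ((hg_meas k).aestronglyMeasurable)
      (c := 1 + Real.log ((k:ℝ)+1)) (ae_of_all _ fun x => (Real.norm_eq_abs _) ▸ hg_bdd k x)
    simpa [mul_comm] using this
  have hhg_int : ∀ (k n : ℕ), Integrable (fun x => h n x * g k x) μ := fun k n => by
    have := ((hfg_int k n).add (hflimg_int k)).div_const 2
    apply this.congr
    apply ae_of_all; intro x
    simp only [Pi.add_apply, hgdef, hhdef]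
    ring
  set A : ℕ → ℝ := fun k => ∫ x, (flim x * g k x - w k x) ∂μ with hAdef
  set B : ℕ → ℕ → ℝ := fun k n => ∫ x, (h n x * g k x - w k x) ∂μ with hBdef
  have htang : ∀ (k n : ℕ) (x : α), h n x * g k x - w k x ≤ h n x * Real.log (h n x) := by
    intro k n x
    have := mul_log_tangent (hh_nonneg n x) (hw_pos k x)
    simp only [hgdef]
    linarith
  have hB_le : ∀ (k n : ℕ), B k n ≤ J n := by
    intro k n
    exact integral_mono ((hhg_int k n).sub (hw_int k)) (hphih_int n) (fun x => htang k n x)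
  have hB_tend : ∀ k : ℕ, Tendsto (fun n => B k n) atTop (𝓝 (A k)) := by
    intro k
    have hsplit : ∀ n, B k n =
        ((∫ x, f n x * g k x ∂μ) + (∫ x, flim x * g k x ∂μ)) / 2 - ∫ x, w k x ∂μ := by
      intro n
      simp only [hBdef]
      rw [integral_sub (hhg_int k n) (hw_int k)]
      congr 1
      rw [← integral_add (hfg_int k n) (hflimg_int k), ← integral_div]
      congr 1; funext x; simp only [hhdef]; ring
    have hA' : A k = ((∫ x, flim x * g k x ∂μ) + (∫ x, flim x * g k x ∂μ)) / 2
        - ∫ x, w k x ∂μ := by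
      simp only [hAdef]
      rw [integral_sub (hflimg_int k) (hw_int k)]
      ring
    rw [hA']
    simp only [hsplit]
    exact Tendsto.sub_const (Tendsto.div_const
      (Tendsto.add_const _ (hweak (g k) (hg_meas k)
        ⟨1 + Real.log ((k:ℝ)+1), hg_bdd k⟩)) 2) _
  have hA_tend : Tendsto A atTop (𝓝 Ilim) := by
    apply tendsto_integral_of_dominated_convergence
      (fun x => flim x + |flim x * Real.log (flim x)| + (flim x + 1))
    · intro k
      exact (hlimint.1.mul ((hg_meas k).aestronglyMeasurable.congr (by rfl))).sub
        (hw_meas k).aestronglyMeasurable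
    · exact (hlimint.add hlimintlog.abs).add (hlimint.add (integrable_const 1))
    · intro k
      filter_upwards [hfme] with x hx
      have ht0 : 0 ≤ flim x := hlimnonneg x
      have hwle1 : w k x ≤ flim x + 1 := by
        have h1 : max (fm x) (1/((k:ℝ)+1)) ≤ max (fm x) 1 := by
          apply max_le_max le_rfl
          rw [div_le_one (hk1 k)]; nlinarith [hk1 k]
        have h2 : max (fm x) 1 ≤ flim x + 1 := by
          rw [← hx]; apply max_le <;> linarith
        exact le_trans (min_le_left _ _) (le_trans h1 h2)
      have hkey : |flim x * Real.log (w k x)| ≤ |flim x * Real.log (flim x)| := by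
        rcases eq_or_lt_of_le ht0 with h0 | h0
        · simp [← h0]
        · have hlogw : |Real.log (w k x)| ≤ |Real.log (flim x)| := by
            by_cases hc : flim x ≤ 1
            · have hw1 : w k x ≤ 1 := by
                apply le_trans (min_le_left _ _)
                apply max_le (by rw [← hx]; exact hc)
                rw [div_le_one (hk1 k)]; nlinarith [hk1 k]
              have hwget : flim x ≤ w k x := by
                apply le_min (by rw [hx]; exact le_max_left _ _)
                calc flim x ≤ 1 := hc
                  _ ≤ (k:ℝ)+1 := by nlinarith [hk1 k]
              rw [abs_of_nonpos (Real.log_nonpos (hw_pos k x).le hw1),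
                abs_of_nonpos (Real.log_nonpos h0.le hc)]
              exact neg_le_neg (Real.log_le_log h0 hwget)
            · push_neg at hc
              have hwge1 : 1 ≤ w k x := by
                apply le_min
                · apply le_trans hc.le; rw [hx]; exact le_max_left _ _
                · nlinarith [hk1 k]
              have hwlet : w k x ≤ flim x := by
                apply le_trans (min_le_left _ _)
                apply max_le (by rw [← hx])
                calc 1/((k:ℝ)+1) ≤ 1 := by
                      rw [div_le_one (hk1 k)]; nlinarith [hk1 k]
                  _ ≤ flim x := hc.le
              rw [abs_of_nonneg (Real.log_nonneg hwge1),
                abs_of_nonneg (Real.log_nonneg hc.le)]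
              exact Real.log_le_log (hw_pos k x) hwlet
          rw [abs_mul, abs_mul]
          exact mul_le_mul_of_nonneg_left hlogw (abs_nonneg _)
      rw [Real.norm_eq_abs]
      calc |flim x * g k x - w k x| ≤ |flim x * g k x| + |w k x| := abs_sub _ _
        _ ≤ (|flim x| + |flim x * Real.log (w k x)|) + |w k x| := by
            have : flim x * g k x = flim x + flim x * Real.log (w k x) := by
              simp only [hgdef]; ring
            rw [this]
            exact add_le_add_left (abs_add_le _ _) _
        _ ≤ flim x + |flim x * Real.log (flim x)| + (flim x + 1) := by
            rw [abs_of_nonneg ht0, abs_of_pos (hw_pos k x)]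
            have := hkey
            linarith [hwle1]
    · filter_upwards [hfme] with x hx
      rcases eq_or_lt_of_le (hlimnonneg x) with h0 | h0
      · have hwx : ∀ k : ℕ, w k x = 1/((k:ℝ)+1) := by
          intro k
          simp only [hwdef, ← hx, ← h0]
          rw [max_eq_right (by positivity), min_eq_left]
          rw [div_le_iff₀ (hk1 k)]; nlinarith [hk1 k]
        have : (fun k => flim x * g k x - w k x) = fun k : ℕ => -(1/((k:ℝ)+1)) := by
          funext k; rw [hwx k, ← h0]; ring
        rw [this, ← h0]
        simp only [zero_mul]
        have := (tendsto_one_div_add_atTop_nhds_zero_nat (𝕜 := ℝ)).neg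
        simpa using this
      · have hev : ∀ᶠ k : ℕ in atTop, w k x = flim x := by
          obtain ⟨K1, hK1⟩ := exists_nat_ge (flim x)
          obtain ⟨K2, hK2⟩ := exists_nat_ge (1/(flim x))
          filter_upwards [eventually_ge_atTop K1, eventually_ge_atTop K2] with k hk1' hk2'
          have hle : flim x ≤ (k:ℝ)+1 := by
            calc flim x ≤ K1 := hK1
              _ ≤ (k:ℝ) := by exact_mod_cast hk1'
              _ ≤ (k:ℝ)+1 := by linarith
          have hge : 1/((k:ℝ)+1) ≤ flim x := by
            have hK2' : 1/(flim x) ≤ (k:ℝ)+1 := by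
              calc 1/(flim x) ≤ K2 := hK2
                _ ≤ (k:ℝ) := by exact_mod_cast hk2'
                _ ≤ (k:ℝ)+1 := by linarith
            rw [div_le_iff₀ (hk1 k)]
            have e : flim x * (1/flim x) = 1 := by field_simp
            nlinarith [mul_le_mul_of_nonneg_left hK2' (hlimnonneg x)]
          simp only [hwdef, ← hx]
          rw [max_eq_left hge, min_eq_left hle]
        have heq : (fun k => flim x * g k x - w k x) =ᶠ[atTop]
            (fun _ => flim x * Real.log (flim x)) := by
          filter_upwards [hev] with k hk
          simp only [hgdef, hk]; ring
        exact Tendsto.congr' heq.symm tendsto_const_nhds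
  -- J tends to Ilim
  have hJ_tend : Tendsto J atTop (𝓝 Ilim) := by
    rw [Metric.tendsto_nhds]
    intro ε hε
    have hI_ev : ∀ᶠ n in atTop, dist (I n) Ilim < ε := by
      apply Metric.tendsto_nhds.mp hconvex ε hε
    have hA_ev : ∀ᶠ k in atTop, dist (A k) Ilim < ε/2 :=
      Metric.tendsto_nhds.mp hA_tend (ε/2) (by positivity)
    obtain ⟨k, hk⟩ := hA_ev.exists
    have hB_ev : ∀ᶠ n in atTop, dist (B k n) (A k) < ε/2 :=
      Metric.tendsto_nhds.mp (hB_tend k) (ε/2) (by positivity)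
    filter_upwards [hI_ev, hB_ev] with n h1 h2
    rw [Real.dist_eq, abs_sub_lt_iff] at h1 h2 hk ⊢
    constructor
    · have := hJ_le n; linarith [h1.1]
    · have := hB_le k n; linarith [h2.2, hk.2]
  -- integral of phiD tends to 0
  have hD_int : ∀ n, Integrable (fun x => phiD (f n x) (flim x)) μ := by
    intro n
    have : (fun x => phiD (f n x) (flim x)) = fun x =>
        (f n x * Real.log (f n x) + flim x * Real.log (flim x))
          - 2 * (h n x * Real.log (h n x)) := by
      funext x; simp only [phiD, hhdef]
    rw [this]
    exact ((hintlog n).add hlimintlog).sub ((hphih_int n).const_mul 2)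
  have hD_tend : Tendsto (fun n => ∫ x, phiD (f n x) (flim x) ∂μ) atTop (𝓝 0) := by
    have hsplit : ∀ n, ∫ x, phiD (f n x) (flim x) ∂μ = (I n + Ilim) - 2 * J n := by
      intro n
      have : (fun x => phiD (f n x) (flim x)) = fun x =>
          (f n x * Real.log (f n x) + flim x * Real.log (flim x))
            - 2 * (h n x * Real.log (h n x)) := by
        funext x; simp only [phiD, hhdef]
      have e1 : ∫ x, ((f n x * Real.log (f n x) + flim x * Real.log (flim x))
            - 2 * (h n x * Real.log (h n x))) ∂μ
          = (∫ x, (f n x * Real.log (f n x) + flim x * Real.log (flim x)) ∂μ)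
            - ∫ x, 2 * (h n x * Real.log (h n x)) ∂μ :=
        integral_sub ((hintlog n).add hlimintlog) ((hphih_int n).const_mul 2)
      have e2 : ∫ x, (f n x * Real.log (f n x) + flim x * Real.log (flim x)) ∂μ
          = (∫ x, f n x * Real.log (f n x) ∂μ) + ∫ x, flim x * Real.log (flim x) ∂μ :=
        integral_add (hintlog n) hlimintlog
      rw [this, e1, e2, integral_const_mul]
    simp only [hsplit]
    have ht : Tendsto (fun n => (I n + Ilim) - 2 * J n) atTop (𝓝 ((Ilim + Ilim) - 2 * Ilim)) :=
      (hconvex.add_const Ilim).sub (hJ_tend.const_mul 2)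
    have e : (Ilim + Ilim) - 2 * Ilim = 0 := by ring
    rwa [e] at ht
  -- convergence in measure
  have hTIM : TendstoInMeasure μ f atTop flim := by
    rw [tendstoInMeasure_iff_dist]
    intro ε hε
    rw [ENNReal.tendsto_nhds_zero]
    intro η hη
    obtain ⟨r, hr0, hrη⟩ : ∃ r : ℝ, 0 < r ∧ ENNReal.ofReal r ≤ η := by
      rcases eq_or_ne η ⊤ with h | h
      · exact ⟨1, one_pos, by simp [h]⟩
      · exact ⟨η.toReal, ENNReal.toReal_pos hη.ne' h, by rw [ENNReal.ofReal_toReal h]⟩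
    set CF : ℝ := ∫ x, flim x ∂μ with hCFdef
    have hCF0 : 0 ≤ CF := integral_nonneg (fun x => hlimnonneg x)
    set M : ℝ := max 1 (2*(CF+1)/r) with hMdef
    have hM1 : (1:ℝ) ≤ M := le_max_left _ _
    have hM0 : (0:ℝ) ≤ M := by linarith
    obtain ⟨c, hc, hcb⟩ := phiD_lb hM0 hε
    have hTail : μ {x | M ≤ flim x} ≤ ENNReal.ofReal (r/2) := by
      have hmar := mul_meas_ge_le_integral_of_nonneg
        (ae_of_all μ (fun x => hlimnonneg x)) hlimint M
      rw [ENNReal.le_ofReal_iff_toReal_le (measure_ne_top μ _) (by positivity)]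
      have hM2 : 2*(CF+1)/r ≤ M := le_max_right _ _
      have hMpos : (0:ℝ) < M := by linarith
      rw [div_le_iff₀ hr0] at hM2
      rw [measureReal_def] at hmar
      nlinarith [ENNReal.toReal_nonneg (a := μ {x | M ≤ flim x})]
    have hDev : ∀ᶠ n in atTop, ∫ x, phiD (f n x) (flim x) ∂μ < c * (r/2) := by
      apply hD_tend.eventually_lt_const
      positivity
    filter_upwards [hDev] with n hn
    have hsub : {x | ε ≤ dist (f n x) (flim x)} ⊆
        {x | c ≤ phiD (f n x) (flim x)} ∪ {x | M ≤ flim x} := by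
      intro x hx
      rw [Set.mem_setOf_eq, Real.dist_eq] at hx
      by_cases hcase : M ≤ flim x
      · exact Or.inr hcase
      · push_neg at hcase
        exact Or.inl (hcb (f n x) (flim x) (hnonneg n x) (hlimnonneg x) hcase.le hx)
    have hMain : μ {x | c ≤ phiD (f n x) (flim x)} ≤ ENNReal.ofReal (r/2) := by
      have hmar := mul_meas_ge_le_integral_of_nonneg
        (ae_of_all μ (fun x => phiD_nonneg (hnonneg n x) (hlimnonneg x))) (hD_int n) c
      rw [ENNReal.le_ofReal_iff_toReal_le (measure_ne_top μ _) (by positivity)]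
      rw [measureReal_def] at hmar
      nlinarith [ENNReal.toReal_nonneg (a := μ {x | c ≤ phiD (f n x) (flim x)})]
    calc μ {x | ε ≤ dist (f n x) (flim x)}
        ≤ μ ({x | c ≤ phiD (f n x) (flim x)} ∪ {x | M ≤ flim x}) := measure_mono hsub
      _ ≤ μ {x | c ≤ phiD (f n x) (flim x)} + μ {x | M ≤ flim x} := measure_union_le _ _
      _ ≤ ENNReal.ofReal (r/2) + ENNReal.ofReal (r/2) := add_le_add hMain hTail
      _ = ENNReal.ofReal r := by
          rw [← ENNReal.ofReal_add (by positivity) (by positivity)]; norm_num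
      _ ≤ η := hrη
  -- uniform integrability of f
  have hUI : UnifIntegrable f 1 μ := by
    intro ε hε
    obtain ⟨δ₀, hδ₀, hδ₀'⟩ := hunif (show (0:ℝ) < ε/2 by positivity)
    refine ⟨min δ₀ (ε/(2*Real.exp 1)), lt_min hδ₀ (by positivity), ?_⟩
    intro i s hs hμs
    have h1 : eLpNorm (s.indicator (fun x => f i x * Real.log (f i x))) 1 μ
        ≤ ENNReal.ofReal (ε/2) :=
      hδ₀' i s hs (le_trans hμs (ENNReal.ofReal_le_ofReal (min_le_left _ _)))
    rw [eLpNorm_one_eq_lintegral_enorm] at h1 ⊢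
    have hpt : ∀ x, (‖s.indicator (f i) x‖ₑ : ℝ≥0∞) ≤
        s.indicator (fun _ => ENNReal.ofReal (Real.exp 1)) x
          + (‖s.indicator (fun y => f i y * Real.log (f i y)) x‖ₑ : ℝ≥0∞) := by
      intro x
      by_cases hx : x ∈ s
      · rw [Set.indicator_of_mem hx, Set.indicator_of_mem hx, Set.indicator_of_mem hx]
        rw [Real.enorm_eq_ofReal (hnonneg i x), Real.enorm_eq_ofReal_abs]
        rw [← ENNReal.ofReal_add (Real.exp_pos 1).le (abs_nonneg _)]
        exact ENNReal.ofReal_le_ofReal (le_exp_add_abs_mul_log (hnonneg i x))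
      · rw [Set.indicator_of_notMem hx, Set.indicator_of_notMem hx,
          Set.indicator_of_notMem hx]
        simp
    calc ∫⁻ x, (‖s.indicator (f i) x‖ₑ : ℝ≥0∞) ∂μ
        ≤ ∫⁻ x, (s.indicator (fun _ => ENNReal.ofReal (Real.exp 1)) x
          + (‖s.indicator (fun y => f i y * Real.log (f i y)) x‖ₑ : ℝ≥0∞)) ∂μ :=
          lintegral_mono hpt
      _ = ENNReal.ofReal (Real.exp 1) * μ s
          + ∫⁻ x, (‖s.indicator (fun y => f i y * Real.log (f i y)) x‖ₑ : ℝ≥0∞) ∂μ := by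
          rw [lintegral_add_left (measurable_const.indicator hs)]
          congr 1
          rw [lintegral_indicator_const hs]
      _ ≤ ENNReal.ofReal (Real.exp 1) * ENNReal.ofReal (ε/(2*Real.exp 1))
          + ENNReal.ofReal (ε/2) := by
          apply add_le_add _ h1
          apply mul_le_mul_right (le_trans hμs (ENNReal.ofReal_le_ofReal (min_le_right _ _)))
      _ ≤ ENNReal.ofReal (ε/2) + ENNReal.ofReal (ε/2) := by
          apply add_le_add_left
          rw [← ENNReal.ofReal_mul (Real.exp_pos 1).le]
          apply ENNReal.ofReal_le_ofReal
          rw [mul_div_assoc']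
          rw [div_le_div_iff₀ (by positivity) (by norm_num)]
          nlinarith [Real.exp_pos 1, hε.le]
      _ = ENNReal.ofReal ε := by
          rw [← ENNReal.ofReal_add (by positivity) (by positivity)]; norm_num
  -- Vitali
  have hVit : Tendsto (fun n => eLpNorm (f n - flim) 1 μ) atTop (𝓝 0) :=
    tendsto_Lp_finite_of_tendstoInMeasure le_rfl ENNReal.one_ne_top
      (fun n => (hint n).1) (memLp_one_iff_integrable.2 hlimint) hUI hTIM
  have heq : ∀ n, ∫ x, |f n x - flim x| ∂μ = (eLpNorm (f n - flim) 1 μ).toReal := by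
    intro n
    rw [eLpNorm_one_eq_lintegral_enorm,
      ← integral_norm_eq_lintegral_enorm ((hint n).sub hlimint).1]
    simp [Real.norm_eq_abs]
  simp only [heq]
  have := (ENNReal.tendsto_toReal (ENNReal.zero_ne_top)).comp hVit
  rw [ENNReal.toReal_zero] at this; exact this
end
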